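/- Continuous functions preserve the Hausdorff property backwards in the appropriate sense: if (f, f̄) is a continuous function from 𝒜 = (X, r, 𝔄) to ℬ = (Y, s, 𝔅) with f injective, and ℬ is Hausdorff, then 𝒜 is Hausdorff. -/
import Mathlib

open unitInterval Classical

noncomputable instance : CompleteLattice I :=
  @Set.Icc.completeLattice ℝ _ 0 1 ⟨zero_le_one⟩

def HausdorffGTS {X A : Type} (r : X → A → I) : Prop :=
  ∀ x1 x2 : X, x1 ≠ x2 → ∃ A1 A2 : A,
    0 < r x1 A1 ∧ 0 < r x2 A2 ∧ ∀ x, min (r x A1) (r x A2) = 0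

theorem stmt19 {X A Y B : Type} (r : X → A → I) (s : Y → B → I)
    (f : X → Y) (fbar : B → A)
    (hcont : ∀ (x : X) (b : B), s (f x) b = r x (fbar b))
    (hinj : Function.Injective f)
    (hH : HausdorffGTS s) : HausdorffGTS r := by
  intro x1 x2 hne
  obtain ⟨B1, B2, h1, h2, hmin⟩ := hH (f x1) (f x2) (fun h => hne (hinj h))
  exact ⟨fbar B1, fbar B2, hcont x1 B1 ▸ h1, hcont x2 B2 ▸ h2,
    fun x => by rw [← hcont x B1, ← hcont x B2]; exact hmin (f x)⟩
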